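/- arXiv:math/0302206 — 5 statements merged into one kernel-verified Lean document; each statement's English description precedes it below -/
import Mathlib

section
/- Let P and Q be groups and let G = P ∗ Q be their free product, with P and Q regarded as subgroups of G via the canonical embeddings. Let P₀ ≤ P and Q₀ ≤ Q be subgroups, let a ∈ P and b ∈ Q, and set g = ab ∈ G. Then the homomorphism from the free product P₀ ∗ Q₀ to G which restricts on P₀ to the inclusion P₀ ↪ G and on Q₀ to the map x ↦ g x g⁻¹ is injective. Consequently, the subgroup of G generated by P₀ ∪ gQ₀g⁻¹ is canonically isomorphic to P₀ ∗ Q₀. -/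
/-!
Since `(inl a)⁻¹ * g = inr b`, conjugating the induced map by `(inl a)⁻¹` turns it into
`Coprod.map` of the embeddings `x ↦ a⁻¹ x a` of `P₀` into `P` and `y ↦ b y b⁻¹` of `Q₀` into `Q`.
A free product of injective homomorphisms is injective, because it maps reduced words letterwise
to reduced words, and reduced words are a normal form for free products.
-/

open Monoid

/-- Let `P`, `Q` be groups, `G = P ∗ Q` their free product, `P₀ ≤ P`, `Q₀ ≤ Q` subgroups,
`a ∈ P`, `b ∈ Q` and `g = ab ∈ G`. The homomorphism `P₀ ∗ Q₀ → G` which restricts on `P₀`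
to the inclusion `P₀ ↪ G` and on `Q₀` to `x ↦ g x g⁻¹`. -/
noncomputable def inducedHom {P Q : Type*} [Group P] [Group Q]
    (P₀ : Subgroup P) (Q₀ : Subgroup Q) (g : Coprod P Q) :
    Coprod ↥P₀ ↥Q₀ →* Coprod P Q :=
  Coprod.lift (Coprod.inl.comp P₀.subtype)
    (((MulAut.conj g).toMonoidHom.comp Coprod.inr).comp Q₀.subtype)

open Function

namespace Monoid.CoprodI

variable {ι : Type*} {M N : ι → Type*} [∀ i, Group (M i)] [∀ i, Group (N i)]

def Word.map (f : ∀ i, M i →* N i) (hf : ∀ i, Injective (f i)) (w : Word M) : Word N where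
  toList := w.toList.map fun l => ⟨l.1, f l.1 l.2⟩
  ne_one := by
    simp only [List.mem_map]
    rintro _ ⟨l, hl, rfl⟩
    exact (map_ne_one_iff (f l.1) (hf l.1)).mpr (w.ne_one l hl)
  chain_ne := (List.isChain_map _).mpr w.chain_ne

theorem Word.prod_map (f : ∀ i, M i →* N i) (hf : ∀ i, Injective (f i)) (w : Word M) :
    (w.map f hf).prod = lift (fun i => of.comp (f i)) w.prod := by
  simp [Word.map, Word.prod, map_list_prod, Function.comp_def]

theorem Word.map_eq_empty_iff (f : ∀ i, M i →* N i) (hf : ∀ i, Injective (f i)) (w : Word M) :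
    w.map f hf = Word.empty ↔ w = Word.empty := by
  simp only [Word.ext_iff, Word.map, Word.empty_toList, List.map_eq_nil_iff]

theorem lift_of_comp_injective (f : ∀ i, M i →* N i) (hf : ∀ i, Injective (f i)) :
    Injective (lift fun i => of.comp (f i)) := by
  classical
  refine (injective_iff_map_eq_one _).mpr fun x hx => ?_
  obtain ⟨w, rfl⟩ := Word.equiv.symm.surjective x
  have hw : w.map f hf = Word.empty :=
    Word.equiv.symm.injective ((Word.prod_map f hf w).trans hx)
  rw [(Word.map_eq_empty_iff f hf w).mp hw]
  rfl

end Monoid.CoprodI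

namespace Monoid.Coprod

universe u v u' v'

variable {G : Type u} {H : Type v} {G' : Type u'} {H' : Type v'}
  [Group G] [Group H] [Group G'] [Group H']

/-- `G ∗ H` is the free product of this family (`true ↦ G`, `false ↦ H`); the `ULift`s only put
both factors in a common universe. -/
abbrev boolFamily (G : Type u) (H : Type v) : Bool → Type (max u v) :=
  fun b => cond b (ULift.{v} G) (ULift.{u} H)

instance (G : Type u) (H : Type v) [Group G] [Group H] : ∀ b, Group (boolFamily G H b)
  | true => inferInstanceAs (Group (ULift G))
  | false => inferInstanceAs (Group (ULift H))

def toCoprodI : G ∗ H →* CoprodI (boolFamily G H) :=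
  lift ((CoprodI.of (i := true)).comp MulEquiv.ulift.symm.toMonoidHom)
    ((CoprodI.of (i := false)).comp MulEquiv.ulift.symm.toMonoidHom)

def ofCoprodI : CoprodI (boolFamily G H) →* G ∗ H :=
  CoprodI.lift fun
    | true => inl.comp MulEquiv.ulift.toMonoidHom
    | false => inr.comp MulEquiv.ulift.toMonoidHom

theorem ofCoprodI_comp_toCoprodI :
    (ofCoprodI (G := G) (H := H)).comp toCoprodI = MonoidHom.id _ := by
  apply hom_ext <;> ext <;> simp [toCoprodI, ofCoprodI]

theorem toCoprodI_injective : Injective (toCoprodI (G := G) (H := H)) :=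
  LeftInverse.injective (g := ofCoprodI) (DFunLike.congr_fun ofCoprodI_comp_toCoprodI)

def boolFamilyMap (f : G →* G') (h : H →* H') : ∀ b, boolFamily G H b →* boolFamily G' H' b
  | true => MulEquiv.ulift.symm.toMonoidHom.comp (f.comp MulEquiv.ulift.toMonoidHom)
  | false => MulEquiv.ulift.symm.toMonoidHom.comp (h.comp MulEquiv.ulift.toMonoidHom)

theorem boolFamilyMap_injective {f : G →* G'} {h : H →* H'} (hf : Injective f)
    (hh : Injective h) : ∀ b, Injective (boolFamilyMap f h b)
  | true => MulEquiv.ulift.symm.injective.comp (hf.comp MulEquiv.ulift.injective)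
  | false => MulEquiv.ulift.symm.injective.comp (hh.comp MulEquiv.ulift.injective)

theorem toCoprodI_comp_map (f : G →* G') (h : H →* H') :
    toCoprodI.comp (map f h) =
      (CoprodI.lift fun b => CoprodI.of.comp (boolFamilyMap f h b)).comp toCoprodI := by
  apply hom_ext <;> ext <;> simp [toCoprodI, boolFamilyMap]

theorem map_injective {f : G →* G'} {h : H →* H'} (hf : Injective f) (hh : Injective h) :
    Injective (map f h) := by
  refine Injective.of_comp (f := toCoprodI) ?_
  rw [← MonoidHom.coe_comp, toCoprodI_comp_map, MonoidHom.coe_comp]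
  exact (CoprodI.lift_of_comp_injective _ (boolFamilyMap_injective hf hh)).comp
    toCoprodI_injective

end Monoid.Coprod

section InducedHom

open Coprod

variable {P Q : Type*} [Group P] [Group Q] (P₀ : Subgroup P) (Q₀ : Subgroup Q)

theorem inducedHom_inl_mul_inr (a : P) (b : Q) :
    inducedHom P₀ Q₀ (inl a * inr b) =
      (MulAut.conj (inl a : P ∗ Q)).toMonoidHom.comp
        (map ((MulAut.conj a⁻¹).toMonoidHom.comp P₀.subtype)
          ((MulAut.conj b).toMonoidHom.comp Q₀.subtype)) := by
  apply hom_ext <;> ext x <;> simp [inducedHom, mul_assoc]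

theorem inducedHom_inl_mul_inr_injective (a : P) (b : Q) :
    Injective (inducedHom P₀ Q₀ (inl a * inr b)) := by
  rw [inducedHom_inl_mul_inr, MonoidHom.coe_comp]
  exact (MulAut.conj _).injective.comp <| map_injective
    ((MulAut.conj a⁻¹).injective.comp P₀.subtype_injective)
    ((MulAut.conj b).injective.comp Q₀.subtype_injective)

theorem range_inducedHom (g : P ∗ Q) :
    (inducedHom P₀ Q₀ g).range =
      Subgroup.closure (inl '' (P₀ : Set P) ∪ (fun x => g * x * g⁻¹) '' (inr '' (Q₀ : Set Q))) := by
  have hconj : (fun x => g * x * g⁻¹) = (MulAut.conj g).toMonoidHom :=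
    funext fun x => (MulAut.conj_apply g x).symm
  rw [inducedHom, range_lift, Subgroup.closure_union, MonoidHom.range_comp, MonoidHom.range_comp,
    Subgroup.range_subtype, Subgroup.range_subtype, ← Subgroup.map_map, hconj]
  simp only [← Subgroup.coe_map, Subgroup.closure_eq]

end InducedHom

/-- The homomorphism `P₀ ∗ Q₀ → G = P ∗ Q` which restricts on `P₀` to the inclusion and on
`Q₀` to conjugation by `g = ab` is injective; consequently the subgroup of `G` generated by
`P₀ ∪ g Q₀ g⁻¹` is canonically isomorphic to the free product `P₀ ∗ Q₀`. -/
theorem free_product_induced_splitting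
    {P Q : Type*} [Group P] [Group Q]
    (P₀ : Subgroup P) (Q₀ : Subgroup Q) (a : P) (b : Q)
    (g : Coprod P Q) (hg : g = Coprod.inl a * Coprod.inr b) :
    Function.Injective (inducedHom P₀ Q₀ g) ∧
      (inducedHom P₀ Q₀ g).range =
        Subgroup.closure
          ((Coprod.inl '' (P₀ : Set P)) ∪
            ((fun x => g * x * g⁻¹) '' (Coprod.inr '' (Q₀ : Set Q)))) :=
  ⟨hg ▸ inducedHom_inl_mul_inr_injective P₀ Q₀ a b, range_inducedHom P₀ Q₀ g⟩
end

section
/- Let C, P, Q be groups and let α : C → P and ω : C → Q be injective homomorphisms. Let G = P ∗_C Q be the amalgamated free product (the pushout of α and ω), in which P and Q embed canonically and the images of α(c) and ω(c) coincide for every c ∈ C. Let P₀ ≤ P and Q₀ ≤ Q be subgroups, let a ∈ P and b ∈ Q, and suppose the folded condition α⁻¹(a⁻¹P₀a) = ω⁻¹(bQ₀b⁻¹) holds; call this subgroup B ≤ C. Then the maps α_f : B → P₀, c ↦ a·α(c)·a⁻¹ and ω_f : B → Q₀, c ↦ b⁻¹·ω(c)·b are well-defined injective homomorphisms, and the homomorphism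 from the amalgamated free product P₀ ∗_B Q₀ (formed with respect to α_f and ω_f) to G which restricts on P₀ to the inclusion P₀ ↪ G and on Q₀ to the map x ↦ (ab)·x·(ab)⁻¹ is injective; its image is the subgroup of G generated by P₀ ∪ (ab)Q₀(ab)⁻¹. -/
open Monoid

/-- The normal subgroup of the free product `P ∗ Q` generated by the relations
`α(c) = ω(c)` for `c ∈ C`. -/
abbrev amalRels {C P Q : Type*} [Group C] [Group P] [Group Q]
    (α : C →* P) (ω : C →* Q) : Subgroup (Coprod P Q) :=
  Subgroup.normalClosure {x | ∃ c : C, x = Coprod.inl (α c) * (Coprod.inr (ω c))⁻¹}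

/-- The amalgamated free product `P ∗_C Q`, i.e. the pushout of `α : C → P` and
`ω : C → Q` in the category of groups. -/
abbrev Amal {C P Q : Type*} [Group C] [Group P] [Group Q]
    (α : C →* P) (ω : C →* Q) : Type _ :=
  Coprod P Q ⧸ amalRels α ω

/-- The canonical map `P → P ∗_C Q`. -/
abbrev Amal.inl {C P Q : Type*} [Group C] [Group P] [Group Q]
    (α : C →* P) (ω : C →* Q) : P →* Amal α ω :=
  (QuotientGroup.mk' (amalRels α ω)).comp Coprod.inl

/-- The canonical map `Q → P ∗_C Q`. -/
abbrev Amal.inr {C P Q : Type*} [Group C] [Group P] [Group Q]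
    (α : C →* P) (ω : C →* Q) : Q →* Amal α ω :=
  (QuotientGroup.mk' (amalRels α ω)).comp Coprod.inr


/-!
The folded condition says precisely that the letter maps `x ↦ a⁻¹ x a` on `P₀` and
`y ↦ b y b⁻¹` on `Q₀` send no element outside the edge group `B` into (the image of) `C`.
A morphism of amalgams with injective edge map and this property sends reduced words to reduced
words, so by the normal form theorem for amalgamated products (Mathlib's `Monoid.PushoutI`) it is
injective. Conjugating it by `a` gives `Ψ`, whose image is generated by the images of the two
factors.
-/

open Function

namespace Monoid.PushoutI

open CoprodI NormalWord

variable {ι : Type*} {H H' : Type*} [Group H] [Group H'] {G G' : ι → Type*}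
  [∀ i, Group (G i)] [∀ i, Group (G' i)] {φ : ∀ i, H →* G i} {φ' : ∀ i, H' →* G' i}

theorem NormalWord.Transversal.eq_one_of_mem_set_of_mem_range (d : Transversal φ) {i : ι} {g : G i}
    (hs : g ∈ d.set i) (hr : g ∈ (φ i).range) : g = 1 := by
  have h₁ := (d.compl i).equiv_snd_eq_self_of_mem_of_one_mem (φ i).range.one_mem hs
  have h₂ := (d.compl i).equiv_snd_eq_one_of_mem_of_one_mem (d.one_mem i) hr
  exact congrArg Subtype.val (h₁.symm.trans h₂)

theorem exists_base_mul_reduced_prod_eq (hφ : ∀ i, Injective (φ i)) (x : PushoutI φ) :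
    ∃ (h : H) (w : Word G), Reduced φ w ∧ base φ h * ofCoprodI w.prod = x := by
  classical
  obtain ⟨d⟩ := transversal_nonempty φ hφ
  let w := NormalWord.equiv (d := d) x
  refine ⟨w.head, w.toWord, fun g hg hr => w.ne_one g hg ?_,
    (NormalWord.equiv (d := d)).symm_apply_apply x⟩
  exact d.eq_one_of_mem_set_of_mem_range (w.normalized g.1 g.2 hg) hr

def Reduced.mapWord {w : Word G} (hw : Reduced φ w) (f : ∀ i, G i →* G' i)
    (hf : ∀ i, (φ' i).range.comap (f i) ≤ (φ i).range) : Word G' where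
  toList := w.toList.map fun l => ⟨l.1, f l.1 l.2⟩
  ne_one := by
    simp only [List.mem_map]
    rintro _ ⟨l, hl, rfl⟩ (h1 : f l.1 l.2 = 1)
    exact hw l hl (hf l.1 (by rw [Subgroup.mem_comap, h1]; exact one_mem _))
  chain_ne := List.isChain_map_of_isChain (R := fun l l' => l.1 ≠ l'.1) _ (fun _ _ h => h)
    w.chain_ne

theorem Reduced.reduced_mapWord {w : Word G} (hw : Reduced φ w) (f : ∀ i, G i →* G' i)
    (hf : ∀ i, (φ' i).range.comap (f i) ≤ (φ i).range) :
    Reduced φ' (hw.mapWord f hf) := by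
  simp only [Reduced, Reduced.mapWord, List.mem_map]
  rintro _ ⟨l, hl, rfl⟩ hr
  exact hw l hl (hf l.1 hr)

variable (η : H →* H') (f : ∀ i, G i →* G' i) (hcomm : ∀ i, (f i).comp (φ i) = (φ' i).comp η)

def map : PushoutI φ →* PushoutI φ' :=
  lift (fun i => (of i).comp (f i)) ((base φ').comp η) fun i => by
    rw [MonoidHom.comp_assoc, hcomm, ← MonoidHom.comp_assoc, of_comp_eq_base]

@[simp]
theorem map_of (i : ι) (g : G i) : map η f hcomm (of i g) = of i (f i g) :=
  lift_of ..

@[simp]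
theorem map_base (h : H) : map η f hcomm (base φ h) = base φ' (η h) :=
  lift_base ..

theorem map_ofCoprodI_prod {w : Word G} (hw : Reduced φ w)
    (hf : ∀ i, (φ' i).range.comap (f i) ≤ (φ i).range) :
    map η f hcomm (ofCoprodI w.prod) = ofCoprodI (hw.mapWord f hf).prod := by
  simp only [Word.prod, Reduced.mapWord, List.map_map]
  induction w.toList with
  | nil => simp
  | cons l ls ih => simp [ih]

theorem map_injective (hφ : ∀ i, Injective (φ i)) (hφ' : ∀ i, Injective (φ' i))
    (hη : Injective η) (hf : ∀ i, (φ' i).range.comap (f i) ≤ (φ i).range) :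
    Injective (map η f hcomm) := by
  rw [injective_iff_map_eq_one]
  intro x hx
  obtain ⟨h, w, hw, rfl⟩ := exists_base_mul_reduced_prod_eq hφ x
  rw [map_mul, map_base, map_ofCoprodI_prod η f hcomm hw hf] at hx
  have hmem : ofCoprodI (hw.mapWord f hf).prod ∈ (base φ').range :=
    ⟨(η h)⁻¹, by rw [map_inv, eq_inv_of_mul_eq_one_right hx]⟩
  have hnil : w.toList = [] := by
    simpa [Reduced.mapWord] using
      congrArg Word.toList ((hw.reduced_mapWord f hf).eq_empty_of_mem_range hφ' hmem)
  have hh : h = 1 := hη <| base_injective hφ' <| by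
    simpa [Word.prod, Reduced.mapWord, hnil] using hx
  simp [Word.prod, hnil, hh]

end Monoid.PushoutI

namespace Amal

universe u v

variable {C : Type*} {P : Type u} {Q : Type v} [Group C] [Group P] [Group Q]
  (α : C →* P) (ω : C →* Q)

theorem inl_apply_eq_inr_apply (c : C) : inl α ω (α c) = inr α ω (ω c) :=
  QuotientGroup.eq_iff_div_mem.2 (Subgroup.subset_normalClosure ⟨c, div_eq_mul_inv _ _⟩)

theorem inl_comp_eq_inr_comp : (inl α ω).comp α = (inr α ω).comp ω :=
  MonoidHom.ext (inl_apply_eq_inr_apply α ω)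

variable {α ω} {K : Type*} [Group K]

def lift (f : P →* K) (g : Q →* K) (h : f.comp α = g.comp ω) : Amal α ω →* K :=
  QuotientGroup.lift _ (Coprod.lift f g) <| Subgroup.normalClosure_le_normal <| by
    rintro _ ⟨c, rfl⟩
    simp only [SetLike.mem_coe, MonoidHom.mem_ker, map_mul, map_inv, Coprod.lift_apply_inl,
      Coprod.lift_apply_inr, mul_inv_eq_one]
    exact DFunLike.congr_fun h c

@[simp]
theorem lift_inl (f : P →* K) (g : Q →* K) (h : f.comp α = g.comp ω) (p : P) :
    lift f g h (inl α ω p) = f p :=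
  Coprod.lift_apply_inl f g p

@[simp]
theorem lift_inr (f : P →* K) (g : Q →* K) (h : f.comp α = g.comp ω) (q : Q) :
    lift f g h (inr α ω q) = g q :=
  Coprod.lift_apply_inr f g q

@[ext]
theorem hom_ext {f g : Amal α ω →* K} (h₁ : f.comp (inl α ω) = g.comp (inl α ω))
    (h₂ : f.comp (inr α ω) = g.comp (inr α ω)) : f = g :=
  QuotientGroup.monoidHom_ext _ (Coprod.hom_ext h₁ h₂)

theorem range_eq (f : Amal α ω →* K) :
    f.range = (f.comp (inl α ω)).range ⊔ (f.comp (inr α ω)).range := by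
  have : f.range = (f.comp (QuotientGroup.mk' (amalRels α ω))).range := by
    rw [MonoidHom.range_comp, QuotientGroup.range_mk', MonoidHom.range_eq_map]
  rw [this, Coprod.range_eq]
  rfl

variable (P Q) in
/-- `P` and `Q` as a `Bool`-indexed family in a common universe, the shape of diagram that
`Monoid.PushoutI` accepts. -/
abbrev pairFam : Bool → Type (max u v) := fun i => cond i (ULift.{v} P) (ULift.{u} Q)

instance : ∀ i, Group (pairFam P Q i)
  | true => inferInstanceAs (Group (ULift P))
  | false => inferInstanceAs (Group (ULift Q))

variable (α ω) in
def pairHom : ∀ i, C →* pairFam P Q i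
  | true => MulEquiv.ulift.symm.toMonoidHom.comp α
  | false => MulEquiv.ulift.symm.toMonoidHom.comp ω

variable (α ω) in
def toPushoutI : Amal α ω →* PushoutI (pairHom α ω) :=
  lift ((PushoutI.of true).comp MulEquiv.ulift.symm.toMonoidHom)
    ((PushoutI.of false).comp MulEquiv.ulift.symm.toMonoidHom) <| by
    ext c
    exact (PushoutI.of_apply_eq_base _ true c).trans (PushoutI.of_apply_eq_base _ false c).symm

variable (α ω) in
def ofPushoutI : PushoutI (pairHom α ω) →* Amal α ω :=
  PushoutI.lift
    (fun | true => (inl α ω).comp MulEquiv.ulift.toMonoidHom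
         | false => (inr α ω).comp MulEquiv.ulift.toMonoidHom)
    ((inl α ω).comp α) fun
      | true => rfl
      | false => (inl_comp_eq_inr_comp α ω).symm

theorem toPushoutI_injective : Injective (toPushoutI α ω) := by
  have : (ofPushoutI α ω).comp (toPushoutI α ω) = MonoidHom.id _ := by
    ext <;> rfl
  exact LeftInverse.injective (g := ofPushoutI α ω) (DFunLike.congr_fun this)

theorem pairHom_injective (hα : Injective α) (hω : Injective ω) :
    ∀ i, Injective (pairHom α ω i)
  | true => MulEquiv.ulift.symm.injective.comp hα
  | false => MulEquiv.ulift.symm.injective.comp hω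

variable {C' P' Q' : Type*} [Group C'] [Group P'] [Group Q']
  {α' : C' →* P'} {ω' : C' →* Q'} {η : C →* C'} {fP : P →* P'} {fQ : Q →* Q'}

variable (η fP fQ) in
def map (hP : fP.comp α = α'.comp η) (hQ : fQ.comp ω = ω'.comp η) : Amal α ω →* Amal α' ω' :=
  lift ((inl α' ω').comp fP) ((inr α' ω').comp fQ) <| MonoidHom.ext fun c => by
    change inl α' ω' ((fP.comp α) c) = inr α' ω' ((fQ.comp ω) c)
    rw [hP, hQ]
    exact inl_apply_eq_inr_apply α' ω' (η c)

@[simp]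
theorem map_inl (hP : fP.comp α = α'.comp η) (hQ : fQ.comp ω = ω'.comp η) (p : P) :
    map η fP fQ hP hQ (inl α ω p) = inl α' ω' (fP p) :=
  lift_inl ..

@[simp]
theorem map_inr (hP : fP.comp α = α'.comp η) (hQ : fQ.comp ω = ω'.comp η) (q : Q) :
    map η fP fQ hP hQ (inr α ω q) = inr α' ω' (fQ q) :=
  lift_inr ..

variable (fP fQ) in
def pairMap : ∀ i, pairFam P Q i →* pairFam P' Q' i
  | true => MulEquiv.ulift.symm.toMonoidHom.comp (fP.comp MulEquiv.ulift.toMonoidHom)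
  | false => MulEquiv.ulift.symm.toMonoidHom.comp (fQ.comp MulEquiv.ulift.toMonoidHom)

theorem pairMap_comp_pairHom (hP : fP.comp α = α'.comp η) (hQ : fQ.comp ω = ω'.comp η) :
    ∀ i, (pairMap fP fQ i).comp (pairHom α ω i) = (pairHom α' ω' i).comp η
  | true => MonoidHom.ext fun c => congrArg ULift.up (DFunLike.congr_fun hP c)
  | false => MonoidHom.ext fun c => congrArg ULift.up (DFunLike.congr_fun hQ c)

theorem comap_range_pairHom_le (hP : α'.range.comap fP ≤ α.range)
    (hQ : ω'.range.comap fQ ≤ ω.range) :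
    ∀ i, (pairHom α' ω' i).range.comap (pairMap fP fQ i) ≤ (pairHom α ω i).range
  | true => fun _ ⟨c, hc⟩ =>
      have ⟨d, hd⟩ := hP ⟨c, congrArg ULift.down hc⟩
      ⟨d, congrArg ULift.up hd⟩
  | false => fun _ ⟨c, hc⟩ =>
      have ⟨d, hd⟩ := hQ ⟨c, congrArg ULift.down hc⟩
      ⟨d, congrArg ULift.up hd⟩

theorem toPushoutI_comp_map (hP : fP.comp α = α'.comp η) (hQ : fQ.comp ω = ω'.comp η) :
    (toPushoutI α' ω').comp (map η fP fQ hP hQ) =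
      (PushoutI.map η (pairMap fP fQ) (pairMap_comp_pairHom hP hQ)).comp (toPushoutI α ω) := by
  ext <;> rfl

theorem map_injective (hα : Injective α) (hω : Injective ω)
    (hα' : Injective α') (hω' : Injective ω') (hη : Injective η)
    (hP : fP.comp α = α'.comp η) (hQ : fQ.comp ω = ω'.comp η)
    (hPr : α'.range.comap fP ≤ α.range) (hQr : ω'.range.comap fQ ≤ ω.range) :
    Injective (map η fP fQ hP hQ) := by
  refine Injective.of_comp (f := toPushoutI α' ω') ?_
  rw [← MonoidHom.coe_comp, toPushoutI_comp_map, MonoidHom.coe_comp]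
  exact (PushoutI.map_injective _ _ _ (pairHom_injective hα hω) (pairHom_injective hα' hω') hη
    (comap_range_pairHom_le hPr hQr)).comp toPushoutI_injective

end Amal

namespace Subgroup

theorem mem_map_conj_iff {P : Type*} [Group P] {g x : P} {K : Subgroup P} :
    x ∈ K.map (MulAut.conj g).toMonoidHom ↔ g⁻¹ * x * g ∈ K := by
  rw [mem_map_equiv, MulAut.conj_symm_apply]

theorem closure_image_union_image {G H K : Type*} [Group G] [Group H] [Group K] (f : G →* K)
    (g : H →* K) (A : Subgroup G) (B : Subgroup H) :
    closure (f '' A ∪ g '' B) = A.map f ⊔ B.map g := by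
  rw [closure_union, ← coe_map, ← coe_map, closure_eq, closure_eq]

end Subgroup

namespace MonoidHom

variable {C P : Type*} [Group C] [Group P] (φ : C →* P) (g : P) {B : Subgroup C} {K : Subgroup P}
  (h : ∀ c ∈ B, g * φ c * g⁻¹ ∈ K)

def conjCodRestrict : B →* K :=
  ((MulAut.conj g).toMonoidHom.comp (φ.comp B.subtype)).codRestrict K fun c => h c c.2

theorem coe_conjCodRestrict_apply (c : B) : (φ.conjCodRestrict g h c : P) = g * φ c * g⁻¹ :=
  rfl

theorem conjCodRestrict_injective (hφ : Injective φ) :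
    Injective (φ.conjCodRestrict g h) :=
  (injective_codRestrict _ _ _).2 <| (MulAut.conj g).injective.comp <| hφ.comp B.subtype_injective

theorem conj_comp_conjCodRestrict :
    ((MulAut.conj g⁻¹).toMonoidHom.comp K.subtype).comp (φ.conjCodRestrict g h) =
      φ.comp B.subtype :=
  MonoidHom.ext fun c => by simp [coe_conjCodRestrict_apply, mul_assoc]

theorem comap_range_le_range_conjCodRestrict (hB : ∀ c, g * φ c * g⁻¹ ∈ K → c ∈ B) :
    φ.range.comap ((MulAut.conj g⁻¹).toMonoidHom.comp K.subtype) ≤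
      (φ.conjCodRestrict g h).range := by
  rintro x ⟨c, hc⟩
  have hx : g * φ c * g⁻¹ = x := by simp [hc, mul_assoc]
  exact ⟨⟨c, hB c (hx ▸ x.2)⟩, Subtype.ext hx⟩

end MonoidHom

theorem Amal.map_conjCodRestrict_injective {C P Q : Type*} [Group C] [Group P] [Group Q]
    {α : C →* P} {ω : C →* Q} (hα : Injective α) (hω : Injective ω) {B : Subgroup C}
    {P₀ : Subgroup P} {Q₀ : Subgroup Q} {a : P} {b : Q}
    (hPB : ∀ c, c ∈ B ↔ a * α c * a⁻¹ ∈ P₀) (hQB : ∀ c, c ∈ B ↔ b * ω c * b⁻¹ ∈ Q₀) :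
    Injective (map B.subtype _ _ (α.conj_comp_conjCodRestrict a fun c => (hPB c).1)
      (ω.conj_comp_conjCodRestrict b fun c => (hQB c).1)) :=
  map_injective (α.conjCodRestrict_injective a _ hα) (ω.conjCodRestrict_injective b _ hω)
    hα hω B.subtype_injective _ _
    (α.comap_range_le_range_conjCodRestrict a _ fun c => (hPB c).2)
    (ω.comap_range_le_range_conjCodRestrict b _ fun c => (hQB c).2)

/-- Let `α : C → P`, `ω : C → Q` be injective homomorphisms, `G = P ∗_C Q` the amalgamated
free product, `P₀ ≤ P`, `Q₀ ≤ Q`, `a ∈ P`, `b ∈ Q`, and suppose the folded condition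
`α⁻¹(a⁻¹ P₀ a) = ω⁻¹(b Q₀ b⁻¹) =: B` holds. Then `c ↦ a α(c) a⁻¹` and `c ↦ b⁻¹ ω(c) b`
are well-defined injective homomorphisms `αf : B → P₀`, `ωf : B → Q₀`, and the induced
homomorphism `P₀ ∗_B Q₀ → G` (inclusion on `P₀`, conjugation by `g = ab` on `Q₀`) is
injective with image the subgroup of `G` generated by `P₀ ∪ g Q₀ g⁻¹`. -/
theorem amalgam_induced_splitting
    {C P Q : Type*} [Group C] [Group P] [Group Q]
    (α : C →* P) (ω : C →* Q)
    (hα : Function.Injective α) (hω : Function.Injective ω)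
    (P₀ : Subgroup P) (Q₀ : Subgroup Q) (a : P) (b : Q)
    (B : Subgroup C)
    (hB : B = Subgroup.comap α (Subgroup.map (MulAut.conj a⁻¹).toMonoidHom P₀))
    (hfold : Subgroup.comap α (Subgroup.map (MulAut.conj a⁻¹).toMonoidHom P₀) =
      Subgroup.comap ω (Subgroup.map (MulAut.conj b).toMonoidHom Q₀)) :
    ∃ (αf : ↥B →* ↥P₀) (ωf : ↥B →* ↥Q₀),
      Function.Injective αf ∧ Function.Injective ωf ∧
      (∀ c : B, (αf c : P) = a * α c * a⁻¹) ∧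
      (∀ c : B, (ωf c : Q) = b⁻¹ * ω c * b) ∧
      ∃ Ψ : Amal αf ωf →* Amal α ω,
        (∀ x : P₀, Ψ (Amal.inl αf ωf x) = Amal.inl α ω (x : P)) ∧
        (∀ y : Q₀, Ψ (Amal.inr αf ωf y) =
          (Amal.inl α ω a * Amal.inr α ω b) * Amal.inr α ω (y : Q) *
            (Amal.inl α ω a * Amal.inr α ω b)⁻¹) ∧
        Function.Injective Ψ ∧
        Ψ.range =
          Subgroup.closure
            ((Amal.inl α ω '' (P₀ : Set P)) ∪
              ((fun x => (Amal.inl α ω a * Amal.inr α ω b) * x *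
                  (Amal.inl α ω a * Amal.inr α ω b)⁻¹) ''
                (Amal.inr α ω '' (Q₀ : Set Q)))) := by
  have hPB : ∀ c, c ∈ B ↔ a * α c * a⁻¹ ∈ P₀ := fun c => by
    rw [hB, Subgroup.mem_comap, Subgroup.mem_map_conj_iff, inv_inv]
  have hQB : ∀ c, c ∈ B ↔ b⁻¹ * ω c * b⁻¹⁻¹ ∈ Q₀ := fun c => by
    rw [hB, hfold, Subgroup.mem_comap, Subgroup.mem_map_conj_iff, inv_inv]
  let αf := α.conjCodRestrict a fun c => (hPB c).1
  let ωf := ω.conjCodRestrict b⁻¹ fun c => (hQB c).1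
  let Θ : Amal αf ωf →* Amal α ω := Amal.map B.subtype _ _
    (α.conj_comp_conjCodRestrict a _) (ω.conj_comp_conjCodRestrict b⁻¹ _)
  have hΘ : Function.Injective Θ := Amal.map_conjCodRestrict_injective hα hω hPB hQB
  let g := Amal.inl α ω a * Amal.inr α ω b
  let Ψ := (MulAut.conj (Amal.inl α ω a)).toMonoidHom.comp Θ
  have hΨP : Ψ.comp (Amal.inl αf ωf) = (Amal.inl α ω).comp P₀.subtype := by
    ext x
    change Amal.inl α ω a * Θ (Amal.inl αf ωf x) * (Amal.inl α ω a)⁻¹ = Amal.inl α ω x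
    rw [Amal.map_inl, ← map_inv, ← map_mul, ← map_mul]
    exact congrArg _ (by simp [mul_assoc])
  have hΨQ : Ψ.comp (Amal.inr αf ωf) =
      (MulAut.conj g).toMonoidHom.comp ((Amal.inr α ω).comp Q₀.subtype) := by
    ext y
    change Amal.inl α ω a * Θ (Amal.inr αf ωf y) * (Amal.inl α ω a)⁻¹ = g * Amal.inr α ω y * g⁻¹
    rw [Amal.map_inr]
    change _ * Amal.inr α ω (b⁻¹⁻¹ * y * b⁻¹⁻¹⁻¹) * _ = _
    simp only [inv_inv, map_mul, map_inv, g, mul_inv_rev, mul_assoc]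
  refine ⟨αf, ωf, α.conjCodRestrict_injective a _ hα, ω.conjCodRestrict_injective b⁻¹ _ hω,
    α.coe_conjCodRestrict_apply a _, fun c => by simp [ωf, MonoidHom.coe_conjCodRestrict_apply],
    Ψ, DFunLike.congr_fun hΨP, DFunLike.congr_fun hΨQ, (MulAut.conj _).injective.comp hΘ, ?_⟩
  rw [Amal.range_eq, hΨP, hΨQ, MonoidHom.range_comp, MonoidHom.range_comp, MonoidHom.range_comp,
    Subgroup.range_subtype, Subgroup.range_subtype]
  exact (Subgroup.closure_image_union_image _ (MulAut.conj g).toMonoidHom _ _).symm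
end

section
/- Let F = F(a,b) be the free group of rank 2 on free generators a, b, and let G = F × ℤ. Let H be the subgroup of G generated by the two elements (a, 0) and (b, 1). Then the intersection of H with F × {0} (equivalently, with the kernel of the projection G → ℤ) is not finitely generated. -/
/-!
The subgroup `H` is the graph of the homomorphism `φ : F → ℤ` with `a ↦ 0`, `b ↦ 1`, so the
intersection in question is `ker φ × {0}`. Map `F` to `ℤ ≀ ℤ = ℤ^(ℤ) ⋊ ℤ` by sending `a` to the
indicator `δ₀` and `b` to the generator of `ℤ`. This lifts `φ`, so `ker φ` lands in the base
`ℤ^(ℤ)`, and `bᴺ a b⁻ᴺ ∈ ker φ` goes to `δ_N`. Finitely many elements of `ker φ` have finitely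
supported images, so they all vanish at some `N`, hence so does everything they generate;
but `bᴺ a b⁻ᴺ` does not.
-/

open SemidirectProduct

theorem Subgroup.not_fg_of_finite_setOf_notMem {G ι : Type*} [Group G] [Infinite ι]
    (K : Subgroup G) (P : ι → Subgroup G) (hfin : ∀ g ∈ K, {i | g ∉ P i}.Finite)
    (hK : ∀ i, ¬ K ≤ P i) : ¬ K.FG := by
  rintro ⟨S, hS⟩
  have hSK : ∀ g ∈ S, g ∈ K := fun g hg => hS ▸ Subgroup.subset_closure hg
  obtain ⟨i, hi⟩ := (S.finite_toSet.biUnion fun g hg => hfin g (hSK g hg)).exists_notMem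
  refine hK i (hS ▸ (Subgroup.closure_le _).2 fun g hg => ?_)
  by_contra hgi
  exact hi (Set.mem_biUnion hg hgi)

noncomputable section

namespace IntWreathInt

abbrev Base : Type := Multiplicative (ℤ →₀ ℤ)

def shift : MulAut Base := AddEquiv.toMultiplicative (Finsupp.domCongr (Equiv.addRight 1))

lemma shift_apply (x : Base) (k : ℤ) : (shift x).toAdd k = x.toAdd (k - 1) := by
  simp [shift, sub_eq_add_neg]

lemma shift_inv_apply (x : Base) (k : ℤ) : (shift⁻¹ x).toAdd k = x.toAdd (k + 1) := by
  simp [shift, MulAut.inv_def]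

lemma shift_zpow_apply (n : ℤ) (x : Base) (k : ℤ) :
    ((shift ^ n) x).toAdd k = x.toAdd (k - n) := by
  induction n using Int.induction_on generalizing x k with
  | zero => simp
  | succ n ih => rw [zpow_add_one, MulAut.mul_apply, ih, shift_apply]; ring_nf
  | pred n ih => rw [zpow_sub_one, MulAut.mul_apply, ih, shift_inv_apply]; ring_nf

abbrev W : Type := Base ⋊[zpowersHom _ shift] Multiplicative ℤ

def vanishingAt (N : ℤ) : Subgroup W :=
  ((Finsupp.applyAddHom N).toMultiplicative.ker).map inl

lemma inl_mem_vanishingAt {N : ℤ} {x : Base} : (inl x : W) ∈ vanishingAt N ↔ x.toAdd N = 0 := by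
  rw [vanishingAt, Subgroup.mem_map_iff_mem inl_injective]
  simp

end IntWreathInt

namespace FreeProdInt

open IntWreathInt

abbrev H : Subgroup (FreeGroup Bool × Multiplicative ℤ) :=
  Subgroup.closure {(FreeGroup.of true, 1), (FreeGroup.of false, Multiplicative.ofAdd 1)}

def toW : FreeGroup Bool →* W :=
  FreeGroup.lift fun x => if x then inl (.ofAdd (Finsupp.single 0 1)) else inr (.ofAdd 1)

lemma rightHom_toW_fst_eq_snd {g : FreeGroup Bool × Multiplicative ℤ} (hg : g ∈ H) :
    rightHom (toW g.1) = g.2 :=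
  have hH : H ≤ MonoidHom.eqLocus ((rightHom.comp toW).comp (MonoidHom.fst _ _))
      (MonoidHom.snd _ _) :=
    (Subgroup.closure_le _).2 (by rintro _ (rfl | rfl) <;> change _ = _ <;> simp [toW])
  hH hg

lemma conj_mem_H (n : ℤ) :
    (FreeGroup.of false ^ n * FreeGroup.of true * (FreeGroup.of false ^ n)⁻¹, 1) ∈ H := by
  have ha : (FreeGroup.of true, 1) ∈ H := Subgroup.subset_closure (by simp)
  have hb : (FreeGroup.of false, Multiplicative.ofAdd 1) ∈ H := Subgroup.subset_closure (by simp)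
  convert mul_mem (mul_mem (zpow_mem hb n) ha) (inv_mem (zpow_mem hb n)) using 1
  ext <;> simp

lemma toW_conj (n : ℤ) :
    toW (FreeGroup.of false ^ n * FreeGroup.of true * (FreeGroup.of false ^ n)⁻¹)
      = inl ((shift ^ n) (.ofAdd (Finsupp.single 0 1))) := by
  have hconj := inl_aut (φ := zpowersHom _ shift) (.ofAdd n) (.ofAdd (Finsupp.single 0 1))
  rw [zpowersHom_apply, toAdd_ofAdd] at hconj
  have hb : toW (FreeGroup.of false) ^ n = inr (.ofAdd n) := by
    simp [toW, ← map_zpow, ← ofAdd_zsmul]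
  simp only [map_mul, map_inv, map_zpow, hb, hconj]
  simp [toW]

end FreeProdInt

end

open IntWreathInt FreeProdInt

/-- Let `F = F(a,b)` be the free group of rank 2 (on generators `a = of true`,
`b = of false`) and `G = F × ℤ`. Let `H ≤ G` be the subgroup generated by `(a, 0)` and
`(b, 1)`. Then the intersection of `H` with `F × {0}` (the kernel of the projection
`G → ℤ`) is not finitely generated. -/
theorem intersection_not_fg :
    ¬ Subgroup.FG
        ((Subgroup.closure
            {(FreeGroup.of true, (1 : Multiplicative ℤ)),
             (FreeGroup.of false, Multiplicative.ofAdd (1 : ℤ))} ⊓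
          MonoidHom.ker (MonoidHom.snd (FreeGroup Bool) (Multiplicative ℤ)))) := by
  refine Subgroup.not_fg_of_finite_setOf_notMem _
    (fun N => (vanishingAt N).comap (toW.comp (MonoidHom.fst _ _))) ?_ fun N hN => ?_
  · rintro g ⟨hgH, hg2⟩
    obtain ⟨x, hx⟩ : toW g.1 ∈ (inl : Base →* W).range := by
      rw [range_inl_eq_ker_rightHom, MonoidHom.mem_ker, rightHom_toW_fst_eq_snd hgH]
      exact hg2
    refine x.toAdd.support.finite_toSet.subset fun k hk => ?_
    simpa [← hx, inl_mem_vanishingAt] using hk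
  · have hvan := hN ⟨conj_mem_H N, rfl⟩
    rw [Subgroup.mem_comap, MonoidHom.comp_apply, MonoidHom.coe_fst, toW_conj,
      inl_mem_vanishingAt, shift_zpow_apply, sub_self] at hvan
    simp at hvan
end

section
/- Let F = F(a,b) be the free group of rank 2 on free generators a, b, let G = F × ℤ, and let H be the subgroup of G generated by the two elements (a, 0) and (b, 1). Then the intersection of H with F × {0} equals the subgroup of G generated by the set of all elements (b⁻ⁿ a bⁿ, 0) with n ∈ ℤ. -/
/-!
Sending `a ↦ 0`, `b ↦ 1` gives a homomorphism `φ : F → ℤ`, and `H` is its graph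
`{(g, φ g)}`, since `H` is generated by the graph points over the generators of `F`.
Hence `H ∩ (F × {0}) = ker φ × {0}`. The subgroup `C` generated by the `b⁻ⁿ a bⁿ` is
normal, because conjugation by `b` shifts `n` and `a ∈ C`; so `F / C` is cyclic,
generated by the image of `b`, and the quotient map factors through `φ`. Thus `ker φ = C`.
-/

open Subgroup

namespace MonoidHom

variable {G M : Type*} [Group G] [Group M]

theorem closure_image_prodMk_eq_graph (f : G →* M) {s : Set G} (hs : closure s = ⊤) :
    closure ((fun g => (g, f g)) '' s) = f.graph := by
  rw [graph_eq_range_prod, range_eq_map, ← hs, map_closure]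
  rfl

theorem graph_inf_ker_snd (f : G →* M) : f.graph ⊓ (snd G M).ker = f.ker.map (inl G M) := by
  ext ⟨g, m⟩
  simp only [mem_inf, mem_graph, MonoidHom.mem_ker, coe_snd, mem_map, inl_apply, Prod.mk.injEq]
  constructor
  · rintro ⟨hg, rfl⟩
    exact ⟨g, hg, rfl, rfl⟩
  · rintro ⟨g, hg, rfl, rfl⟩
    exact ⟨hg, rfl⟩

end MonoidHom

section ConjugatesByPowers

variable {G : Type*} [Group G] (a b : G)

def conjugatesByPowers : Set G := {g | ∃ n : ℤ, g = b ^ (-n) * a * b ^ n}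

theorem conj_image_conjugatesByPowers :
    MulAut.conj b '' conjugatesByPowers a b = conjugatesByPowers a b := by
  ext g
  constructor
  · rintro ⟨_, ⟨n, rfl⟩, rfl⟩
    exact ⟨n - 1, by simp only [MulAut.conj_apply]; group⟩
  · rintro ⟨n, rfl⟩
    exact ⟨_, ⟨n + 1, rfl⟩, by simp only [MulAut.conj_apply]; group⟩

theorem mem_closure_conjugatesByPowers : a ∈ closure (conjugatesByPowers a b) :=
  subset_closure ⟨0, by simp⟩

theorem normal_closure_conjugatesByPowers (hgen : closure {a, b} = ⊤) :
    (closure (conjugatesByPowers a b)).Normal := by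
  rw [← normalizer_eq_top_iff, eq_top_iff, ← hgen, closure_le, Set.pair_subset_iff]
  constructor
  · exact le_normalizer (mem_closure_conjugatesByPowers a b)
  · exact normalizer_le_normalizer_closure _
      (mem_normalizer_iff_conj_image_eq.2 (conj_image_conjugatesByPowers a b))

theorem ker_eq_closure_conjugatesByPowers (hgen : closure {a, b} = ⊤)
    (φ : G →* Multiplicative ℤ) (ha : φ a = 1) (hb : φ b = Multiplicative.ofAdd 1) :
    φ.ker = closure (conjugatesByPowers a b) := by
  set C := closure (conjugatesByPowers a b)
  have : C.Normal := normal_closure_conjugatesByPowers a b hgen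
  refine le_antisymm (fun g hg => ?_) ((closure_le _).2 ?_)
  · have hfactor : QuotientGroup.mk' C = (zpowersHom _ (QuotientGroup.mk' C b)).comp φ := by
      refine MonoidHom.eq_of_eqOn_dense hgen ?_
      simp only [Set.EqOn, Set.mem_insert_iff, Set.mem_singleton_iff, forall_eq_or_imp, forall_eq]
      constructor
      · simpa [ha] using mem_closure_conjugatesByPowers a b
      · simp [hb]
    rw [← QuotientGroup.ker_mk' C, MonoidHom.mem_ker, hfactor, MonoidHom.comp_apply,
      MonoidHom.mem_ker.1 hg, map_one]
  · rintro _ ⟨n, rfl⟩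
    simp [ha]

end ConjugatesByPowers

/-- Let `F = F(a,b)` be the free group of rank 2 (on generators `a = of true`,
`b = of false`), `G = F × ℤ`, and `H ≤ G` the subgroup generated by `(a, 0)` and `(b, 1)`.
Then the intersection of `H` with `F × {0}` (the kernel of the projection `G → ℤ`) equals
the subgroup of `G` generated by all elements `(b⁻ⁿ a bⁿ, 0)` with `n ∈ ℤ`. -/
theorem intersection_eq_closure_conjugates :
    (Subgroup.closure
        {(FreeGroup.of true, (1 : Multiplicative ℤ)),
         (FreeGroup.of false, Multiplicative.ofAdd (1 : ℤ))} ⊓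
      MonoidHom.ker (MonoidHom.snd (FreeGroup Bool) (Multiplicative ℤ)))
    = Subgroup.closure
        {x : FreeGroup Bool × Multiplicative ℤ |
          ∃ n : ℤ, x = ((FreeGroup.of false) ^ (-n) * FreeGroup.of true *
            (FreeGroup.of false) ^ n, (1 : Multiplicative ℤ))} := by
  set φ : FreeGroup Bool →* Multiplicative ℤ :=
    FreeGroup.lift fun x => if x then 1 else Multiplicative.ofAdd 1
  have hgen : closure {FreeGroup.of true, FreeGroup.of false} = ⊤ := by
    rw [← FreeGroup.closure_range_of]
    congr
    ext x
    simp [or_comm]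
  have hH : closure {(FreeGroup.of true, (1 : Multiplicative ℤ)),
      (FreeGroup.of false, Multiplicative.ofAdd (1 : ℤ))} = φ.graph := by
    rw [← φ.closure_image_prodMk_eq_graph hgen, Set.image_pair]
    simp [φ]
  rw [hH, φ.graph_inf_ker_snd,
    ker_eq_closure_conjugatesByPowers _ _ hgen φ (by simp [φ]) (by simp [φ]), MonoidHom.map_closure]
  congr 1
  ext x
  simp [conjugatesByPowers, eq_comm]
end

section
/- Let G be the group with presentation ⟨a, b, c, d | a² = c³⟩, i.e. the amalgamated free product F(a,b) ∗_{a²=c³} F(c,d) of two free groups of rank 2 amalgamated over the infinite cyclic subgroups ⟨a²⟩ and ⟨c³⟩. Let H be the subgroup of G generated by the four elements a⁴, b², c³d¹⁰, d¹⁰. Then H equals the subgroup of G generated by a², b², d¹⁰, and H is a free group of rank 3: the homomorphism from the free group F(x,y,z) on three generators to G sending x ↦ a², y ↦ b², z ↦ d¹⁰ is injective with image H. -/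
namespace FoldingAux

open FreeGroup

variable {α : Type*} [DecidableEq α]

lemma cons_toWord (i : α) (b : Bool) (w : FreeGroup α)
    (h : w.toWord.head? ≠ some (i, !b)) :
    (FreeGroup.mk [(i, b)] * w).toWord = (i, b) :: w.toWord := by
  conv_lhs => rw [← FreeGroup.mk_toWord (x := w)]
  rw [FreeGroup.mul_mk, FreeGroup.toWord_mk, List.singleton_append,
    FreeGroup.reduce.cons, FreeGroup.reduce_toWord]
  cases hw : w.toWord with
  | nil => rfl
  | cons hd tl =>
    simp only
    rw [if_neg]
    rintro ⟨h1, h2⟩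
    apply h
    rw [hw]
    obtain ⟨j, c⟩ := hd
    simp only at h1 h2
    subst h1
    simp [h2]

lemma pow_head (i : α) (b : Bool) (n : ℕ) (w : FreeGroup α)
    (h : w.toWord.head? ≠ some (i, !b)) :
    ((FreeGroup.mk [(i, b)]) ^ (n + 1) * w).toWord.head? = some (i, b) := by
  induction n with
  | zero => rw [pow_one, cons_toWord i b w h]; rfl
  | succ n ih =>
    rw [pow_succ', mul_assoc, cons_toWord]
    · rfl
    · rw [ih]
      simp

omit [DecidableEq α] in
lemma of_eq_mk (i : α) : FreeGroup.of i = FreeGroup.mk [(i, true)] := rfl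

omit [DecidableEq α] in
lemma inv_of_eq_mk (i : α) : (FreeGroup.of i)⁻¹ = FreeGroup.mk [(i, false)] := by
  rw [of_eq_mk, FreeGroup.inv_mk]
  rfl

theorem pow_lift_injective [Nontrivial α] (n : α → ℕ) (hn : ∀ i, n i ≠ 0) :
    Function.Injective (FreeGroup.lift (fun i => FreeGroup.of i ^ n i) :
      FreeGroup α →* FreeGroup α) := by
  apply FreeGroup.injective_lift_of_ping_pong (α := FreeGroup α)
    (X := fun i => {w : FreeGroup α | w.toWord.head? = some (i, true)})
    (Y := fun i => {w : FreeGroup α | w.toWord.head? = some (i, false)})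
  · intro i
    exact ⟨FreeGroup.of i, by simp [FreeGroup.toWord_of]⟩
  · intro i j hij
    simp only [Function.onFun, Set.disjoint_left]
    rintro w hw hw'
    simp only [Set.mem_setOf_eq] at hw hw'
    rw [hw] at hw'
    exact hij (by simpa using hw')
  · intro i j hij
    simp only [Function.onFun, Set.disjoint_left]
    rintro w hw hw'
    simp only [Set.mem_setOf_eq] at hw hw'
    rw [hw] at hw'
    exact hij (by simpa using hw')
  · intro i j
    simp only [Function.onFun, Set.disjoint_left]
    rintro w hw hw'
    simp only [Set.mem_setOf_eq] at hw hw'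
    rw [hw] at hw'
    simp at hw'
  · intro i
    rintro x ⟨w, hw, rfl⟩
    simp only [Set.mem_compl_iff, Set.mem_setOf_eq] at hw
    have := pow_head i true (n i - 1) w (by simpa using hw)
    simp only [Set.mem_setOf_eq, smul_eq_mul]
    rw [of_eq_mk]
    rwa [Nat.sub_add_cancel (Nat.one_le_iff_ne_zero.2 (hn i))] at this
  · intro i
    rintro x ⟨w, hw, rfl⟩
    simp only [Set.mem_compl_iff, Set.mem_setOf_eq] at hw
    have := pow_head i false (n i - 1) w (by simpa using hw)
    simp only [Set.mem_setOf_eq, smul_eq_mul, Pi.inv_apply]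
    rw [← inv_pow, inv_of_eq_mk]
    rwa [Nat.sub_add_cancel (Nat.one_le_iff_ne_zero.2 (hn i))] at this

end FoldingAux

/-- The single defining relation `a² c⁻³` of the amalgamated product
`F(a,b) ∗_{a²=c³} F(c,d)`, with generators `a, b, c, d` numbered `0, 1, 2, 3`. -/
def amalgamRels : Set (FreeGroup (Fin 4)) :=
  {FreeGroup.of 0 ^ 2 * (FreeGroup.of 2 ^ 3)⁻¹}

/-- `G = ⟨a, b, c, d ∣ a² = c³⟩ = F(a,b) ∗_{a²=c³} F(c,d)`. -/
abbrev AmalgamGroup : Type := PresentedGroup amalgamRels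

/-- The images of the generators `a, b, c, d` in `G`. -/
def ga : AmalgamGroup := PresentedGroup.of 0
def gb : AmalgamGroup := PresentedGroup.of 1
def gc : AmalgamGroup := PresentedGroup.of 2
def gd : AmalgamGroup := PresentedGroup.of 3

lemma key_rel : ga ^ 2 = gc ^ 3 := by
  have h : (PresentedGroup.mk amalgamRels) (FreeGroup.of 0 ^ 2 * (FreeGroup.of 2 ^ 3)⁻¹) = 1 :=
    (QuotientGroup.eq_one_iff _).2 (Subgroup.subset_normalClosure rfl)
  have h2 : ga ^ 2 * (gc ^ 3)⁻¹ = 1 := by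
    simpa [ga, gc, PresentedGroup.of, map_mul, map_pow, map_inv] using h
  rw [← mul_inv_eq_one]
  exact h2

/-- The homomorphism `G → F(t,u,v)`, `a ↦ t³, b ↦ u, c ↦ t², d ↦ v`. -/
def phi : AmalgamGroup →* FreeGroup (Fin 3) :=
  PresentedGroup.toGroup (f := ![FreeGroup.of 0 ^ 3, FreeGroup.of 1, FreeGroup.of 0 ^ 2,
    FreeGroup.of 2]) (by
      rintro r rfl
      simp [← pow_mul])

/-- Let `G = ⟨a, b, c, d ∣ a² = c³⟩` and let `H ≤ G` be the subgroup generated by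
`a⁴, b², c³d¹⁰, d¹⁰`. Then `H = ⟨a², b², d¹⁰⟩` and `H` is free of rank 3: the
homomorphism `F(x,y,z) → G` with `x ↦ a²`, `y ↦ b²`, `z ↦ d¹⁰` is injective
with image `H`. -/
theorem folding_example :
    Subgroup.closure {ga ^ 4, gb ^ 2, gc ^ 3 * gd ^ 10, gd ^ 10}
      = Subgroup.closure {ga ^ 2, gb ^ 2, gd ^ 10} ∧
    Function.Injective (FreeGroup.lift ![ga ^ 2, gb ^ 2, gd ^ 10]) ∧
    (FreeGroup.lift ![ga ^ 2, gb ^ 2, gd ^ 10]).range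
      = Subgroup.closure {ga ^ 4, gb ^ 2, gc ^ 3 * gd ^ 10, gd ^ 10} := by
  have hclos : Subgroup.closure {ga ^ 4, gb ^ 2, gc ^ 3 * gd ^ 10, gd ^ 10}
      = Subgroup.closure {ga ^ 2, gb ^ 2, gd ^ 10} := by
    have ha2 : ga ^ 2 ∈ Subgroup.closure {ga ^ 2, gb ^ 2, gd ^ 10} :=
      Subgroup.subset_closure (by simp)
    have hd10 : gd ^ 10 ∈ Subgroup.closure {ga ^ 2, gb ^ 2, gd ^ 10} :=
      Subgroup.subset_closure (by simp)
    apply le_antisymm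
    · rw [Subgroup.closure_le]
      rintro x (rfl | rfl | rfl | rfl)
      · have h4 : ga ^ 4 = (ga ^ 2) ^ 2 := by group
        rw [h4]
        exact pow_mem ha2 2
      · exact Subgroup.subset_closure (by simp)
      · rw [← key_rel]
        exact mul_mem ha2 hd10
      · exact hd10
    · rw [Subgroup.closure_le]
      rintro x (rfl | rfl | rfl)
      · rw [key_rel, show gc ^ 3 = (gc ^ 3 * gd ^ 10) * (gd ^ 10)⁻¹ by group]
        exact mul_mem (Subgroup.subset_closure (by simp))
          (inv_mem (Subgroup.subset_closure (by simp)))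
      · exact Subgroup.subset_closure (by simp)
      · exact Subgroup.subset_closure (by simp)
  have hcomp : phi.comp (FreeGroup.lift ![ga ^ 2, gb ^ 2, gd ^ 10])
      = FreeGroup.lift (fun i => FreeGroup.of i ^ (![6, 2, 10] : Fin 3 → ℕ) i) := by
    ext i
    fin_cases i <;>
      simp [phi, ga, gb, gd, PresentedGroup.toGroup.of, ← pow_mul]
  have hinj2 : Function.Injective
      (FreeGroup.lift (fun i => FreeGroup.of i ^ (![6, 2, 10] : Fin 3 → ℕ) i)) :=
    FoldingAux.pow_lift_injective _ (by decide)
  have hinj : Function.Injective (FreeGroup.lift ![ga ^ 2, gb ^ 2, gd ^ 10]) := by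
    have : ⇑phi ∘ ⇑(FreeGroup.lift ![ga ^ 2, gb ^ 2, gd ^ 10])
        = ⇑(FreeGroup.lift (fun i => FreeGroup.of i ^ (![6, 2, 10] : Fin 3 → ℕ) i)) := by
      rw [← MonoidHom.coe_comp, hcomp]
    refine Function.Injective.of_comp (f := ⇑phi) ?_
    rw [this]
    exact hinj2
  refine ⟨hclos, hinj, ?_⟩
  rw [FreeGroup.range_lift_eq_closure, hclos,
    show Set.range ![ga ^ 2, gb ^ 2, gd ^ 10] = {ga ^ 2, gb ^ 2, gd ^ 10} by
      ext x
      simp [Matrix.range_cons, Matrix.range_empty]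
      tauto]
end
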